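/- arXiv:2405.09535 — 5 statements merged into one kernel-verified Lean document; each statement's English description precedes it below -/
import Mathlib

section
/- In the Gaussian output model with parameters r ∈ ℝ, q > 0, b ∈ ℝ, the area under the ROC curve AUC = ∫_{−∞}^{∞} (−FPR′(γ))·TPR(γ) dγ equals H(−r/√(2q)). In particular the AUC does not depend on the bias b. -/
open MeasureTheory Real ProbabilityTheory Set

namespace GaussAUC

lemma continuous_pdf (m : ℝ) (v : NNReal) : Continuous (gaussianPDFReal m v) := by
  rw [gaussianPDFReal_def]
  fun_prop

lemma tail_eq (m : ℝ) {v : NNReal} (hv : v ≠ 0) (γ : ℝ) :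
    ((gaussianReal m v) (Ioi γ)).toReal = ∫ t in Ioi γ, gaussianPDFReal m v t := by
  rw [gaussianReal_apply_eq_integral m hv, ENNReal.toReal_ofReal]
  exact setIntegral_nonneg measurableSet_Ioi fun t _ => gaussianPDFReal_nonneg _ _ _

lemma tail_hasDerivAt (m : ℝ) (v : NNReal) (γ : ℝ) :
    HasDerivAt (fun x => ∫ t in Ioi x, gaussianPDFReal m v t)
      (-(gaussianPDFReal m v γ)) γ := by
  set f := gaussianPDFReal m v with hf
  have hint : Integrable f := integrable_gaussianPDFReal m v
  have hcont : Continuous f := continuous_pdf m v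
  have key : (fun x : ℝ => ∫ t in Ioi x, f t)
      = fun x => ((∫ t, f t) - ∫ t in Iic (0:ℝ), f t) - ∫ t in (0:ℝ)..x, f t := by
    funext x
    have h1 := intervalIntegral.integral_Iic_add_Ioi (b := x) (f := f) (μ := volume)
      hint.integrableOn hint.integrableOn
    have h2 := intervalIntegral.integral_Iic_sub_Iic (a := (0:ℝ)) (b := x) (f := f)
      (μ := volume) hint.integrableOn hint.integrableOn
    linarith
  rw [key]
  have hd : HasDerivAt (fun x => ∫ t in (0:ℝ)..x, f t) (f γ) γ :=
    intervalIntegral.integral_hasDerivAt_right hint.intervalIntegrable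
      (hcont.stronglyMeasurableAtFilter _ _) hcont.continuousAt
  exact hd.const_sub _

lemma translate_Ioi (f : ℝ → ℝ) (γ : ℝ) :
    ∫ t in Ioi γ, f t = ∫ u in Ioi (0:ℝ), f (γ + u) := by
  have hemb : MeasurableEmbedding (fun u : ℝ => γ + u) :=
    (MeasurableEquiv.addLeft γ).measurableEmbedding
  have hmap : Measure.map (fun u : ℝ => γ + u) volume = volume :=
    map_add_left_eq_self volume γ
  conv_lhs => rw [← hmap]
  rw [hemb.setIntegral_map]
  congr 1
  ext u
  simp

lemma conv_eq (m₁ m₂ : ℝ) {q : ℝ} (hq : 0 < q) (u : ℝ) :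
    ∫ γ : ℝ, gaussianPDFReal m₁ q.toNNReal γ * gaussianPDFReal m₂ q.toNNReal (γ + u)
      = gaussianPDFReal (m₂ - m₁) (2*q).toNNReal u := by
  have hc : ((q.toNNReal : ℝ)) = q := Real.coe_toNNReal q hq.le
  have hc2 : (((2*q).toNNReal : ℝ)) = 2*q := Real.coe_toNNReal _ (by linarith)
  set c : ℝ := (m₁ + m₂ - u) / 2 with hcdef
  have hπq : (0:ℝ) < π * q := mul_pos pi_pos hq
  have key : (fun γ : ℝ => gaussianPDFReal m₁ q.toNNReal γ * gaussianPDFReal m₂ q.toNNReal (γ + u))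
      = fun γ => ((√(2*π*q))⁻¹ * (√(2*π*q))⁻¹ * rexp (-(u - (m₂ - m₁))^2 / (4*q)))
          * rexp (-(γ - c)^2 / q) := by
    funext γ
    simp only [gaussianPDFReal, hc]
    have hexp : rexp (-(γ - m₁)^2 / (2*q)) * rexp (-(γ + u - m₂)^2 / (2*q))
        = rexp (-(u - (m₂ - m₁))^2 / (4*q)) * rexp (-(γ - c)^2 / q) := by
      rw [← Real.exp_add, ← Real.exp_add]
      congr 1
      field_simp
      ring
    calc (√(2*π*q))⁻¹ * rexp (-(γ - m₁)^2 / (2*q))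
          * ((√(2*π*q))⁻¹ * rexp (-(γ + u - m₂)^2 / (2*q)))
        = (√(2*π*q))⁻¹ * (√(2*π*q))⁻¹
          * (rexp (-(γ - m₁)^2 / (2*q)) * rexp (-(γ + u - m₂)^2 / (2*q))) := by ring
      _ = _ := by rw [hexp]; ring
  rw [key, integral_const_mul]
  have hshift : ∫ γ : ℝ, rexp (-(γ - c)^2 / q) = ∫ γ : ℝ, rexp (-(γ)^2 / q) :=
    integral_sub_right_eq_self (fun γ => rexp (-(γ)^2 / q)) c
  have hgauss : ∫ γ : ℝ, rexp (-(γ)^2 / q) = √(π * q) := by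
    have h1 : (fun γ : ℝ => rexp (-(γ)^2 / q)) = fun γ : ℝ => rexp (-q⁻¹ * γ^2) := by
      funext γ; congr 1; ring
    rw [h1, integral_gaussian]
    congr 1
    field_simp
  rw [hshift, hgauss]
  simp only [gaussianPDFReal, hc2]
  have h2 : √(2*π*q) * √(2*π*q) = 2*π*q := Real.mul_self_sqrt (by positivity)
  have h4 : √(π*q) * √(π*q) = π*q := Real.mul_self_sqrt (by positivity)
  have h3 : √(2*π*(2*q)) = 2 * √(π*q) := by
    rw [show 2*π*(2*q) = 2^2 * (π*q) by ring, Real.sqrt_mul (by positivity),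
      Real.sqrt_sq (by norm_num)]
  have hexp2 : (-(u - (m₂ - m₁))^2 / (4*q)) = (-(u - (m₂ - m₁))^2 / (2*(2*q))) := by ring_nf
  rw [h3, hexp2]
  have hK : (√(2*π*q))⁻¹ * (√(2*π*q))⁻¹ * √(π*q) = (2*√(π*q))⁻¹ := by
    have hA : (√(2*π*q))⁻¹ * (√(2*π*q))⁻¹ = (2*π*q)⁻¹ := by rw [← mul_inv, h2]
    rw [hA]
    have hmul : (2*π*q)⁻¹ * √(π*q) * (2*√(π*q)) = 1 := by
      have hstep : (2*π*q)⁻¹ * √(π*q) * (2*√(π*q))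
          = (2*π*q)⁻¹ * (2*(√(π*q)*√(π*q))) := by ring
      rw [hstep, h4, show (2:ℝ)*(π*q) = 2*π*q by ring,
        inv_mul_cancel₀ (by positivity : (2*π*q) ≠ (0:ℝ))]
    field_simp at hmul ⊢
    linarith [hmul]
  linear_combination rexp (-(u - (m₂ - m₁))^2 / (2*(2*q))) * hK
lemma final_tail (r q : ℝ) (hq : 0 < q) :
    ∫ u in Ioi (0:ℝ), gaussianPDFReal r (2*q).toNNReal u
      = (1 / Real.sqrt (2*π)) * ∫ t in Ioi (-r / Real.sqrt (2*q)), rexp (-t^2/2) := by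
  have h2q : (0:ℝ) < 2*q := by linarith
  have hv2 : (2*q).toNNReal ≠ 0 := by
    simp only [ne_eq, Real.toNNReal_eq_zero, not_le]; linarith
  set s := Real.sqrt (2*q) with hs
  have hspos : 0 < s := Real.sqrt_pos.mpr h2q
  have hw : NNReal.mk (s^2) (sq_nonneg s) * 1 = (2*q).toNNReal := by
    ext
    simp [Real.coe_toNNReal _ h2q.le]
    rw [hs, Real.sq_sqrt h2q.le]
  have hmap : (gaussianReal 0 1).map (fun x => s * x + r) = gaussianReal r ((2*q).toNNReal) := by
    have h1 : (gaussianReal 0 1).map (fun x => s * x)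
        = gaussianReal 0 (NNReal.mk (s^2) (sq_nonneg s) * 1) := by
      have := gaussianReal_map_const_mul (μ := 0) (v := 1) s
      simpa using this
    have hcomp : (gaussianReal 0 1).map (fun x => s * x + r)
        = ((gaussianReal 0 1).map (fun x => s * x)).map (· + r) :=
      (Measure.map_map (measurable_add_const r) (measurable_const_mul s)).symm
    rw [hcomp, h1, hw, gaussianReal_map_add_const, zero_add]
  have happ : (gaussianReal r ((2*q).toNNReal)) (Ioi 0) = (gaussianReal 0 1) (Ioi (-r/s)) := by
    rw [← hmap, Measure.map_apply (by fun_prop) measurableSet_Ioi]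
    congr 1
    ext x
    simp only [mem_preimage, mem_Ioi]
    rw [div_lt_iff₀ hspos]
    constructor <;> intro h <;> nlinarith [mul_comm s x]
  rw [← tail_eq r hv2 0, happ, tail_eq 0 one_ne_zero]
  have hpdf : (fun t => gaussianPDFReal 0 1 t) = fun t => (1/√(2*π)) * rexp (-t^2/2) := by
    funext t
    simp only [gaussianPDFReal, NNReal.coe_one, mul_one, sub_zero, one_div]
  simp only [hpdf]
  rw [MeasureTheory.integral_const_mul]



end GaussAUC

/-- In the Gaussian output model, the area under the ROC curve,
AUC = ∫ (−FPR′(γ))·TPR(γ) dγ, equals H(−r/√(2q)); in particular it does not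
depend on the bias b. -/
theorem gaussian_model_auc
    (r q b : ℝ) (hq : 0 < q)
    (H TPR FPR : ℝ → ℝ)
    (hH : ∀ x, H x = (1 / Real.sqrt (2 * π)) * ∫ t in Set.Ioi x, Real.exp (-t ^ 2 / 2))
    (hTPR : ∀ γ, TPR γ
      = ((ProbabilityTheory.gaussianReal (r / 2 - b) q.toNNReal) (Set.Ioi γ)).toReal)
    (hFPR : ∀ γ, FPR γ
      = ((ProbabilityTheory.gaussianReal (-r / 2 - b) q.toNNReal) (Set.Ioi γ)).toReal) :
    ∫ γ : ℝ, (-(deriv FPR γ)) * TPR γ = H (-r / Real.sqrt (2 * q)) := by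
  have hv : q.toNNReal ≠ 0 := by
    simp only [ne_eq, Real.toNNReal_eq_zero, not_le]; linarith
  set fm := gaussianPDFReal (-r / 2 - b) q.toNNReal with hfm
  set fp := gaussianPDFReal (r / 2 - b) q.toNNReal with hfp
  have hFPR' : FPR = fun γ => ∫ t in Set.Ioi γ, fm t := funext fun γ => by
    rw [hFPR γ, GaussAUC.tail_eq _ hv γ]
  have hTPR' : ∀ γ, TPR γ = ∫ t in Set.Ioi γ, fp t := fun γ => by
    rw [hTPR γ, GaussAUC.tail_eq _ hv γ]
  have hderiv : ∀ γ, deriv FPR γ = -(fm γ) := fun γ => by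
    rw [hFPR']
    exact (GaussAUC.tail_hasDerivAt _ q.toNNReal γ).deriv
  have hcontm : Continuous fm := GaussAUC.continuous_pdf _ _
  have hcontp : Continuous fp := GaussAUC.continuous_pdf _ _
  have hintm : Integrable fm := integrable_gaussianPDFReal _ _
  have hintp : Integrable fp := integrable_gaussianPDFReal _ _
  have hmeasF : AEStronglyMeasurable (Function.uncurry fun γ u => fm γ * fp (γ + u))
      ((volume : Measure ℝ).prod ((volume : Measure ℝ).restrict (Set.Ioi 0))) := by
    apply Continuous.aestronglyMeasurable
    exact (hcontm.comp continuous_fst).mul (hcontp.comp (continuous_fst.add continuous_snd))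
  have htrans : ∀ γ : ℝ, Integrable (fun u => fp (γ + u)) volume := fun γ =>
    hintp.comp_add_left γ
  have htail_le : ∀ γ : ℝ, ∫ u in Set.Ioi (0:ℝ), fp (γ + u) ≤ 1 := by
    intro γ
    have h1 : ∫ u : ℝ, fp (γ + u) = 1 := by
      rw [integral_add_left_eq_self fp γ]
      exact integral_gaussianPDFReal_eq_one _ hv
    calc ∫ u in Set.Ioi (0:ℝ), fp (γ + u) ≤ ∫ u : ℝ, fp (γ + u) :=
          setIntegral_le_integral (htrans γ)
            (Filter.Eventually.of_forall fun u => gaussianPDFReal_nonneg _ _ _)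
      _ = 1 := h1
  have hnorm : ∀ γ : ℝ, ∫ u in Set.Ioi (0:ℝ), ‖fm γ * fp (γ + u)‖
      = fm γ * ∫ u in Set.Ioi (0:ℝ), fp (γ + u) := by
    intro γ
    rw [← integral_const_mul]
    apply setIntegral_congr_fun measurableSet_Ioi
    intro u _
    exact Real.norm_of_nonneg
      (mul_nonneg (gaussianPDFReal_nonneg _ _ _) (gaussianPDFReal_nonneg _ _ _))
  have hF : Integrable (Function.uncurry fun γ u => fm γ * fp (γ + u))
      ((volume : Measure ℝ).prod ((volume : Measure ℝ).restrict (Set.Ioi 0))) := by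
    rw [MeasureTheory.integrable_prod_iff hmeasF]
    constructor
    · exact Filter.Eventually.of_forall fun γ => ((htrans γ).restrict.const_mul (fm γ))
    · apply Integrable.mono hintm hmeasF.norm.integral_prod_right'
      apply Filter.Eventually.of_forall
      intro γ
      have hpos : 0 ≤ ∫ u in Set.Ioi (0:ℝ), ‖fm γ * fp (γ + u)‖ :=
        integral_nonneg fun u => norm_nonneg _
      simp only [Function.uncurry]
      rw [Real.norm_of_nonneg hpos, hnorm γ, Real.norm_of_nonneg (gaussianPDFReal_nonneg _ _ _)]
      calc fm γ * ∫ u in Set.Ioi (0:ℝ), fp (γ + u)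
          ≤ fm γ * 1 := mul_le_mul_of_nonneg_left (htail_le γ) (gaussianPDFReal_nonneg _ _ _)
        _ = fm γ := mul_one _
  have hr : (r / 2 - b) - (-r / 2 - b) = r := by ring
  calc ∫ γ : ℝ, (-(deriv FPR γ)) * TPR γ
      = ∫ γ : ℝ, fm γ * ∫ t in Set.Ioi γ, fp t := by
        simp only [hderiv, neg_neg, hTPR']
    _ = ∫ γ : ℝ, ∫ u in Set.Ioi (0:ℝ), fm γ * fp (γ + u) := by
        simp only [GaussAUC.translate_Ioi fp, ← integral_const_mul]
    _ = ∫ u in Set.Ioi (0:ℝ), ∫ γ : ℝ, fm γ * fp (γ + u) :=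
        MeasureTheory.integral_integral_swap hF
    _ = ∫ u in Set.Ioi (0:ℝ), gaussianPDFReal r (2*q).toNNReal u := by
        apply setIntegral_congr_fun measurableSet_Ioi
        intro u _
        exact (GaussAUC.conv_eq _ _ hq u).trans (by rw [hr])
    _ = (1 / Real.sqrt (2*π)) * ∫ t in Set.Ioi (-r / Real.sqrt (2*q)), rexp (-t^2/2) :=
        GaussAUC.final_tail r q hq
    _ = H (-r / Real.sqrt (2 * q)) := (hH _).symm
end

section
/- For every β > 0, w > 0 and a ∈ ℝ, the Gaussian integral of the exponentiated hinge loss satisfies ∫_ℝ e^{−β·max(0, a − Δ)} · (1/√(2πw)) e^{−Δ²/(2w)} dΔ = e^{−βa + β²w/2} · H((βw − a)/√w) + H(a/√w). -/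
open Real MeasureTheory Set

private lemma my_integral_comp_add_right_Ioi (f : ℝ → ℝ) (c d : ℝ) :
    ∫ x in Set.Ioi c, f (x + d) = ∫ x in Set.Ioi (c + d), f x := by
  have A : MeasurableEmbedding fun x : ℝ => x + d :=
    (Homeomorph.addRight d).isClosedEmbedding.measurableEmbedding
  have h := A.setIntegral_map (μ := volume) f (Set.Ioi (c + d))
  rw [map_add_right_eq_self volume d] at h
  rw [h]
  congr 1
  ext x
  simp [lt_sub_iff_add_lt]

/-- Gaussian integral of the exponentiated hinge loss:
∫ e^{−β·max(0, a − Δ)} N(Δ | 0, w) dΔ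
  = e^{−βa + β²w/2}·H((βw − a)/√w) + H(a/√w). -/
theorem gaussian_integral_exp_hinge
    (β w a : ℝ) (hβ : 0 < β) (hw : 0 < w)
    (H : ℝ → ℝ)
    (hH : ∀ x, H x = (1 / Real.sqrt (2 * π)) * ∫ t in Set.Ioi x, Real.exp (-t ^ 2 / 2)) :
    ∫ Δ : ℝ, Real.exp (-β * max 0 (a - Δ))
        * ((1 / Real.sqrt (2 * π * w)) * Real.exp (-Δ ^ 2 / (2 * w)))
      = Real.exp (-β * a + β ^ 2 * w / 2) * H ((β * w - a) / Real.sqrt w)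
        + H (a / Real.sqrt w) := by
  set sw := Real.sqrt w with hsw_def
  have hsw : 0 < sw := Real.sqrt_pos.mpr hw
  have hsw2 : sw * sw = w := Real.mul_self_sqrt hw.le
  have hsplitC : Real.sqrt (2 * π * w) = Real.sqrt (2 * π) * sw := by
    rw [hsw_def, ← Real.sqrt_mul (by positivity)]
  set f : ℝ → ℝ := fun Δ => Real.exp (-β * max 0 (a - Δ))
      * ((1 / Real.sqrt (2 * π * w)) * Real.exp (-Δ ^ 2 / (2 * w))) with hf_def
  set g : ℝ → ℝ := fun t => Real.exp (-t ^ 2 / 2) with hg_def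
  -- integrability of the basic gaussian
  have hg0 : Integrable (fun Δ : ℝ => Real.exp (-Δ ^ 2 / (2 * w))) := by
    have h := integrable_exp_neg_mul_sq (show (0:ℝ) < (2*w)⁻¹ by positivity)
    have he : (fun Δ : ℝ => Real.exp (-Δ ^ 2 / (2 * w)))
        = fun x : ℝ => Real.exp (-(2*w)⁻¹ * x ^ 2) :=
      funext fun x => by rw [neg_div, div_eq_mul_inv, mul_comm, neg_mul]
    rw [he]; exact h
  have hgshift : Integrable (fun Δ : ℝ => Real.exp (-(Δ - β * w) ^ 2 / (2 * w))) := by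
    exact hg0.comp_sub_right (β * w)
  -- pointwise identities
  have hIic_eq : ∀ Δ ∈ Iic a,
      f Δ = (1 / Real.sqrt (2 * π * w)) * Real.exp (-β * a + β ^ 2 * w / 2)
        * Real.exp (-(Δ - β * w) ^ 2 / (2 * w)) := by
    intro Δ hΔ
    have hmax : max 0 (a - Δ) = a - Δ := max_eq_right (by simp at hΔ; linarith)
    have key : Real.exp (-β * (a - Δ)) * Real.exp (-Δ ^ 2 / (2 * w))
        = Real.exp (-β * a + β ^ 2 * w / 2) * Real.exp (-(Δ - β * w) ^ 2 / (2 * w)) := by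
      rw [← Real.exp_add, ← Real.exp_add]
      congr 1
      field_simp
      ring
    have hstep : f Δ = Real.exp (-β * (a - Δ)) * Real.exp (-Δ ^ 2 / (2 * w))
        * (1 / Real.sqrt (2 * π * w)) := by
      rw [hf_def]; simp only [hmax]; ring
    rw [hstep, key]; ring
  have hIoi_eq : ∀ Δ ∈ Ioi a,
      f Δ = (1 / Real.sqrt (2 * π * w)) * Real.exp (-Δ ^ 2 / (2 * w)) := by
    intro Δ hΔ
    have : max 0 (a - Δ) = 0 := max_eq_left (by simp at hΔ; linarith)
    rw [hf_def]; simp [this]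
  -- integrability on pieces
  have hInt1 : IntegrableOn f (Iic a) := by
    exact (Integrable.integrableOn ((hgshift.const_mul _))).congr_fun
      (fun Δ hΔ => (hIic_eq Δ hΔ).symm) measurableSet_Iic
  have hInt2 : IntegrableOn f (Ioi a) := by
    exact (Integrable.integrableOn ((hg0.const_mul _))).congr_fun
      (fun Δ hΔ => (hIoi_eq Δ hΔ).symm) measurableSet_Ioi
  have hsplit : (∫ Δ : ℝ, f Δ) = (∫ Δ in Iic a, f Δ) + ∫ Δ in Ioi a, f Δ :=
    (intervalIntegral.integral_Iic_add_Ioi hInt1 hInt2).symm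
  -- change of variables on Ioi a
  have hscale : ∀ c : ℝ, ∫ Δ in Ioi c, Real.exp (-Δ ^ 2 / (2 * w)) = sw * ∫ t in Ioi (c / sw), g t := by
    intro c
    have hsq : sw⁻¹ ^ 2 = w⁻¹ := by rw [← hsw2, sq, mul_inv]
    have h1 : ∀ Δ : ℝ, Real.exp (-Δ ^ 2 / (2 * w)) = g (sw⁻¹ * Δ) := by
      intro Δ
      rw [hg_def]
      simp only
      congr 1
      rw [mul_pow, hsq]
      field_simp
    simp_rw [h1]
    rw [integral_comp_mul_left_Ioi g c (inv_pos.mpr hsw)]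
    rw [inv_inv, smul_eq_mul, inv_mul_eq_div]
  have hIoi_val : ∫ Δ in Ioi a, f Δ
      = (1 / Real.sqrt (2 * π)) * ∫ t in Ioi (a / sw), g t := by
    rw [setIntegral_congr_fun measurableSet_Ioi hIoi_eq, integral_const_mul, hscale a,
      hsplitC]
    field_simp
  -- change of variables on Iic a
  have hIic_gauss : ∫ Δ in Iic a, Real.exp (-(Δ - β * w) ^ 2 / (2 * w))
      = sw * ∫ t in Ioi ((β * w - a) / sw), g t := by
    have h1 : ∀ Δ : ℝ, Real.exp (-(Δ - β * w) ^ 2 / (2 * w))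
        = (fun x => Real.exp (-(x + β * w) ^ 2 / (2 * w))) (-Δ) := by
      intro Δ; simp only; congr 1; ring_nf
    calc ∫ Δ in Iic a, Real.exp (-(Δ - β * w) ^ 2 / (2 * w))
        = ∫ Δ in Iic a, (fun x => Real.exp (-(x + β * w) ^ 2 / (2 * w))) (-Δ) := by
          simp_rw [← h1]
      _ = ∫ x in Ioi (-a), Real.exp (-(x + β * w) ^ 2 / (2 * w)) :=
          integral_comp_neg_Iic a (fun x => Real.exp (-(x + β * w) ^ 2 / (2 * w)))
      _ = ∫ x in Ioi (-a + β * w), Real.exp (-x ^ 2 / (2 * w)) :=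
          my_integral_comp_add_right_Ioi (fun x => Real.exp (-x ^ 2 / (2 * w))) (-a) (β * w)
      _ = sw * ∫ t in Ioi ((β * w - a) / sw), g t := by
          rw [hscale (-a + β * w)]; ring_nf
  have hIic_val : ∫ Δ in Iic a, f Δ
      = Real.exp (-β * a + β ^ 2 * w / 2)
        * ((1 / Real.sqrt (2 * π)) * ∫ t in Ioi ((β * w - a) / sw), g t) := by
    rw [setIntegral_congr_fun measurableSet_Iic hIic_eq, integral_const_mul, hIic_gauss,
      hsplitC]
    field_simp
  calc ∫ Δ : ℝ, f Δ = (∫ Δ in Iic a, f Δ) + ∫ Δ in Ioi a, f Δ := hsplit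
    _ = Real.exp (-β * a + β ^ 2 * w / 2) * H ((β * w - a) / sw) + H (a / sw) := by
        rw [hIic_val, hIoi_val, hH, hH]
end

section
/- Fix x > 0 and a ∈ ℝ, and for β > 0 define F_β(a) = e^{−βa + βx/2} · H(√β·(x − a)/√x) + H(√β·a/√x). Then lim_{β→∞} (1/β)·log F_β(a) = −E(a), where E(a) = 0 if a ≤ 0, E(a) = a²/(2x) if 0 < a ≤ x, and E(a) = a − x/2 if a > x. -/
open Real Filter

section ZeroTempAux

open MeasureTheory Set

noncomputable def Gt (z : ℝ) : ℝ := ∫ t in Set.Ioi z, Real.exp (-t ^ 2 / 2)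

lemma gauss_integrable : Integrable (fun t : ℝ => Real.exp (-t ^ 2 / 2)) := by
  have h := integrable_exp_neg_mul_sq (b := (1:ℝ)/2) (by norm_num)
  have : (fun t : ℝ => Real.exp (-t ^ 2 / 2)) = fun t : ℝ => Real.exp (-(1/2 : ℝ) * t ^ 2) := by
    ext t; congr 1; ring
  rw [this]; exact h

lemma Gt_lb (z : ℝ) : Real.exp (-(|z| + 1) ^ 2 / 2) ≤ Gt z := by
  have h1 : ∫ t in Set.Ioc z (z + 1), Real.exp (-t ^ 2 / 2) ≤ Gt z := by
    apply setIntegral_mono_set gauss_integrable.integrableOn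
    · filter_upwards with t using (Real.exp_pos _).le
    · exact HasSubset.Subset.eventuallyLE Set.Ioc_subset_Ioi_self
  have h2 : ∫ t in Set.Ioc z (z + 1), Real.exp (-(|z| + 1) ^ 2 / 2)
      ≤ ∫ t in Set.Ioc z (z + 1), Real.exp (-t ^ 2 / 2) := by
    apply setIntegral_mono_on
    · exact integrableOn_const measure_Ioc_lt_top.ne
    · exact gauss_integrable.integrableOn
    · exact measurableSet_Ioc
    · intro t ht
      apply Real.exp_le_exp.2
      have hb1 : -(|z| + 1) ≤ t := by
        have := neg_abs_le z; linarith [ht.1]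
      have hb2 : t ≤ |z| + 1 := by
        have := le_abs_self z; linarith [ht.2]
      nlinarith
  have h3 : ∫ t in Set.Ioc z (z + 1), Real.exp (-(|z| + 1) ^ 2 / 2)
      = Real.exp (-(|z| + 1) ^ 2 / 2) := by
    rw [setIntegral_const]
    simp [Real.volume_Ioc]
  linarith

lemma Gt_pos (z : ℝ) : 0 < Gt z := lt_of_lt_of_le (Real.exp_pos _) (Gt_lb z)

lemma Gt_le (z : ℝ) : Gt z ≤ Real.sqrt (2 * π) := by
  have h1 : Gt z ≤ ∫ t : ℝ, Real.exp (-t ^ 2 / 2) :=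
    setIntegral_le_integral gauss_integrable (Eventually.of_forall fun t => (Real.exp_pos _).le)
  have h2 : ∫ t : ℝ, Real.exp (-t ^ 2 / 2) = Real.sqrt (2 * π) := by
    have : (fun t : ℝ => Real.exp (-t ^ 2 / 2)) = fun t : ℝ => Real.exp (-(1/2 : ℝ) * t ^ 2) := by
      ext t; congr 1; ring
    rw [this, integral_gaussian]
    congr 1; ring
  linarith

lemma Gt_half {z : ℝ} (hz : z ≤ 0) : Real.sqrt (2 * π) / 2 ≤ Gt z := by
  have h1 : ∫ t in Set.Ioi (0:ℝ), Real.exp (-t ^ 2 / 2) ≤ Gt z := by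
    apply setIntegral_mono_set gauss_integrable.integrableOn
    · filter_upwards with t using (Real.exp_pos _).le
    · exact HasSubset.Subset.eventuallyLE (Set.Ioi_subset_Ioi hz)
  have h2 : ∫ t in Set.Ioi (0:ℝ), Real.exp (-t ^ 2 / 2) = Real.sqrt (2 * π) / 2 := by
    have : (fun t : ℝ => Real.exp (-t ^ 2 / 2)) = fun t : ℝ => Real.exp (-(1/2 : ℝ) * t ^ 2) := by
      ext t; congr 1; ring
    rw [this, integral_gaussian_Ioi]
    congr 2; ring
  linarith

lemma Gt_ub {z : ℝ} (hz : 0 < z) : Gt z ≤ Real.exp (-z ^ 2 / 2) / z := by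
  have key : ∫ t in Set.Ioi z, t * Real.exp (-t ^ 2 / 2) = Real.exp (-z ^ 2 / 2) := by
    have hderiv : ∀ t ∈ Set.Ici z, HasDerivAt (fun u : ℝ => -Real.exp (-u ^ 2 / 2))
        (t * Real.exp (-t ^ 2 / 2)) t := by
      intro t _
      have h1 : HasDerivAt (fun u : ℝ => -u ^ 2 / 2) (-t) t := by
        have := ((hasDerivAt_pow 2 t).neg).div_const 2
        simpa using this.congr_deriv (by push_cast; ring)
      have := (h1.exp).neg
      exact this.congr_deriv (by ring)
    have htend : Tendsto (fun u : ℝ => -Real.exp (-u ^ 2 / 2)) atTop (nhds 0) := by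
      have h0 : Tendsto (fun u : ℝ => Real.exp (-u ^ 2 / 2)) atTop (nhds 0) := by
        apply Real.tendsto_exp_atBot.comp
        apply Filter.Tendsto.atBot_div_const (by norm_num : (0:ℝ) < 2)
        exact tendsto_neg_atBot_iff.2 (tendsto_pow_atTop (by norm_num))
      simpa using h0.neg
    have := integral_Ioi_of_hasDerivAt_of_nonneg' hderiv
      (fun t ht => mul_nonneg (le_of_lt (lt_trans hz ht)) (Real.exp_pos _).le) htend
    simpa using this
  have h2 : Gt z ≤ ∫ t in Set.Ioi z, (1/z) * (t * Real.exp (-t ^ 2 / 2)) := by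
    apply setIntegral_mono_on gauss_integrable.integrableOn
    · exact (integrableOn_Ioi_deriv_of_nonneg'
        (g := fun u : ℝ => -Real.exp (-u ^ 2 / 2)) (fun t ht => by
          have h1 : HasDerivAt (fun u : ℝ => -u ^ 2 / 2) (-t) t := by
            have := ((hasDerivAt_pow 2 t).neg).div_const 2
            simpa using this.congr_deriv (by push_cast; ring)
          have := (h1.exp).neg
          exact this.congr_deriv (by ring))
        (fun t ht => mul_nonneg (le_of_lt (lt_trans hz ht)) (Real.exp_pos _).le)
        (by
          have h0 : Tendsto (fun u : ℝ => Real.exp (-u ^ 2 / 2)) atTop (nhds 0) := by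
            apply Real.tendsto_exp_atBot.comp
            apply Filter.Tendsto.atBot_div_const (by norm_num : (0:ℝ) < 2)
            exact tendsto_neg_atBot_iff.2 (tendsto_pow_atTop (by norm_num))
          simpa using h0.neg)).const_mul (1/z)
    · exact measurableSet_Ioi
    · intro t ht
      have h1 : (1:ℝ) ≤ t / z := (le_div_iff₀ hz).2 (by simpa using (le_of_lt ht))
      have := mul_le_mul_of_nonneg_right h1 (Real.exp_pos (-t ^ 2 / 2)).le
      calc Real.exp (-t ^ 2 / 2) = 1 * Real.exp (-t ^ 2 / 2) := by ring
        _ ≤ (t / z) * Real.exp (-t ^ 2 / 2) := this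
        _ = (1/z) * (t * Real.exp (-t ^ 2 / 2)) := by ring
  rw [integral_const_mul, key] at h2
  calc Gt z ≤ 1 / z * Real.exp (-z ^ 2 / 2) := h2
    _ = Real.exp (-z ^ 2 / 2) / z := by ring


lemma inv_sqrt_tendsto : Tendsto (fun β : ℝ => 1 / Real.sqrt β) atTop (nhds 0) := by
  have h1 : Tendsto (fun β : ℝ => Real.sqrt β⁻¹) atTop (nhds 0) := by
    have := (Real.continuous_sqrt.tendsto 0).comp tendsto_inv_atTop_zero
    simpa [Function.comp_def] using this
  apply h1.congr' ?_
  filter_upwards [eventually_gt_atTop 0] with β hβ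
  rw [Real.sqrt_inv, one_div]

lemma log_div_tendsto : Tendsto (fun β : ℝ => Real.log β / β) atTop (nhds 0) :=
  Real.isLittleO_log_id_atTop.tendsto_div_nhds_zero

lemma const_div_tendsto (c : ℝ) : Tendsto (fun β : ℝ => (1 / β) * c) atTop (nhds 0) := by
  have := tendsto_inv_atTop_zero (𝕜 := ℝ).mul_const c
  simpa [one_div] using this

lemma Hlim (c : ℝ) :
    Tendsto (fun β : ℝ => (1 / β) * Real.log ((1 / Real.sqrt (2 * π)) * Gt (c * Real.sqrt β)))
      atTop (nhds (-(max c 0) ^ 2 / 2)) := by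
  have hπ : (0:ℝ) < 2 * π := by positivity
  have hs : 0 < Real.sqrt (2 * π) := Real.sqrt_pos.2 hπ
  rcases le_or_gt c 0 with hc | hc
  · -- limit 0
    rw [max_eq_right hc]
    simp only [neg_zero, zero_pow, ne_eq, OfNat.ofNat_ne_zero, not_false_eq_true, zero_div]
    have hlow : ∀ᶠ β : ℝ in atTop,
        (1 / β) * Real.log (1/2 : ℝ) ≤ (1 / β) * Real.log ((1 / Real.sqrt (2 * π)) * Gt (c * Real.sqrt β)) := by
      filter_upwards [eventually_gt_atTop 0] with β hβ
      apply mul_le_mul_of_nonneg_left _ (by positivity)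
      apply Real.log_le_log (by norm_num)
      have hz : c * Real.sqrt β ≤ 0 := mul_nonpos_of_nonpos_of_nonneg hc (Real.sqrt_nonneg β)
      have hgh := Gt_half hz
      calc (1/2 : ℝ) = (1 / Real.sqrt (2*π)) * (Real.sqrt (2*π) / 2) := by field_simp
        _ ≤ _ := mul_le_mul_of_nonneg_left hgh (by positivity)
    have hhigh : ∀ᶠ β : ℝ in atTop,
        (1 / β) * Real.log ((1 / Real.sqrt (2 * π)) * Gt (c * Real.sqrt β)) ≤ (1 / β) * 0 := by
      filter_upwards [eventually_gt_atTop 0] with β hβ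
      apply mul_le_mul_of_nonneg_left _ (by positivity)
      rw [show (0:ℝ) = Real.log 1 by simp]
      apply Real.log_le_log (mul_pos (by positivity) (Gt_pos _))
      calc (1 / Real.sqrt (2 * π)) * Gt (c * Real.sqrt β)
          ≤ (1 / Real.sqrt (2 * π)) * Real.sqrt (2 * π) :=
            mul_le_mul_of_nonneg_left (Gt_le _) (by positivity)
        _ = 1 := by field_simp
    refine tendsto_of_tendsto_of_tendsto_of_le_of_le' (const_div_tendsto _) ?_ hlow hhigh
    simpa using const_div_tendsto 0
  · -- limit -c^2/2
    rw [max_eq_left hc.le]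
    have hlow : ∀ᶠ β : ℝ in atTop,
        (1 / β) * Real.log (1 / Real.sqrt (2 * π)) - (c + 1 / Real.sqrt β) ^ 2 / 2
          ≤ (1 / β) * Real.log ((1 / Real.sqrt (2 * π)) * Gt (c * Real.sqrt β)) := by
      filter_upwards [eventually_gt_atTop 0] with β hβ
      have hsb : 0 < Real.sqrt β := Real.sqrt_pos.2 hβ
      have hz : 0 ≤ c * Real.sqrt β := mul_nonneg hc.le hsb.le
      have hlb := Gt_lb (c * Real.sqrt β)
      rw [abs_of_nonneg hz] at hlb
      have h1 : Real.log (1 / Real.sqrt (2 * π)) + (-(c * Real.sqrt β + 1) ^ 2 / 2)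
          ≤ Real.log ((1 / Real.sqrt (2 * π)) * Gt (c * Real.sqrt β)) := by
        rw [Real.log_mul (by positivity) (Gt_pos _).ne']
        have := Real.log_le_log (Real.exp_pos _) hlb
        rw [Real.log_exp] at this
        linarith
      have h2 := mul_le_mul_of_nonneg_left h1 (le_of_lt (by positivity : (0:ℝ) < 1/β))
      calc (1 / β) * Real.log (1 / Real.sqrt (2 * π)) - (c + 1 / Real.sqrt β) ^ 2 / 2
          = (1 / β) * (Real.log (1 / Real.sqrt (2 * π)) + (-(c * Real.sqrt β + 1) ^ 2 / 2)) := by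
            have hb : Real.sqrt β ^ 2 = β := Real.sq_sqrt hβ.le
            field_simp
            nlinarith [hb, sq_nonneg (Real.sqrt β)]
        _ ≤ _ := h2
    have hhigh : ∀ᶠ β : ℝ in atTop,
        (1 / β) * Real.log ((1 / Real.sqrt (2 * π)) * Gt (c * Real.sqrt β))
          ≤ (1 / β) * (Real.log (1 / Real.sqrt (2 * π)) - Real.log c)
            - Real.log β / β / 2 - c ^ 2 / 2 := by
      filter_upwards [eventually_gt_atTop 0] with β hβ
      have hsb : 0 < Real.sqrt β := Real.sqrt_pos.2 hβ
      have hz : 0 < c * Real.sqrt β := mul_pos hc hsb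
      have hub := Gt_ub hz
      have h1 : Real.log ((1 / Real.sqrt (2 * π)) * Gt (c * Real.sqrt β))
          ≤ Real.log (1 / Real.sqrt (2 * π)) + (-(c * Real.sqrt β) ^ 2 / 2 - Real.log (c * Real.sqrt β)) := by
        rw [Real.log_mul (by positivity) (Gt_pos _).ne']
        have := Real.log_le_log (Gt_pos _) hub
        rw [Real.log_div (Real.exp_ne_zero _) hz.ne', Real.log_exp] at this
        linarith
      have h2 := mul_le_mul_of_nonneg_left h1 (le_of_lt (by positivity : (0:ℝ) < 1/β))
      refine h2.trans (le_of_eq ?_)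
      have hb : Real.sqrt β ^ 2 = β := Real.sq_sqrt hβ.le
      rw [Real.log_mul hc.ne' hsb.ne', Real.log_sqrt hβ.le, mul_pow, hb]
      have hL : Real.log (1 / Real.sqrt (2 * π)) = Real.log (1 / Real.sqrt (2 * π)) := rfl
      generalize Real.log (1 / Real.sqrt (2 * π)) = L
      generalize Real.log c = Lc
      generalize Real.log β = Lb
      field_simp
      ring
    have hlowlim : Tendsto (fun β : ℝ =>
        (1 / β) * Real.log (1 / Real.sqrt (2 * π)) - (c + 1 / Real.sqrt β) ^ 2 / 2) atTop
        (nhds (-c ^ 2 / 2)) := by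
      have h1 : Tendsto (fun β : ℝ => (c + 1 / Real.sqrt β) ^ 2 / 2) atTop (nhds (c ^ 2 / 2)) := by
        have := ((tendsto_const_nhds (x := c)).add inv_sqrt_tendsto).pow 2
        simpa using this.div_const 2
      have := (const_div_tendsto (Real.log (1 / Real.sqrt (2 * π)))).sub h1
      simpa [neg_div] using this
    have hhighlim : Tendsto (fun β : ℝ =>
        (1 / β) * (Real.log (1 / Real.sqrt (2 * π)) - Real.log c)
          - Real.log β / β / 2 - c ^ 2 / 2) atTop (nhds (-c ^ 2 / 2)) := by
      have h1 := (const_div_tendsto (Real.log (1 / Real.sqrt (2 * π)) - Real.log c)).sub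
        (log_div_tendsto.div_const 2)
      have h2 := h1.sub (tendsto_const_nhds (x := c ^ 2 / 2))
      simpa [neg_div] using h2
    exact tendsto_of_tendsto_of_tendsto_of_le_of_le' hlowlim hhighlim hlow hhigh

lemma one_div_log_add {A B : ℝ → ℝ} {al ga : ℝ}
    (hA : ∀ᶠ β : ℝ in atTop, 0 < A β) (hB : ∀ᶠ β : ℝ in atTop, 0 < B β)
    (ha : Tendsto (fun β : ℝ => (1 / β) * Real.log (A β)) atTop (nhds al))
    (hb : Tendsto (fun β : ℝ => (1 / β) * Real.log (B β)) atTop (nhds ga)) :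
    Tendsto (fun β : ℝ => (1 / β) * Real.log (A β + B β)) atTop (nhds (max al ga)) := by
  have hlow : ∀ᶠ β : ℝ in atTop,
      max ((1 / β) * Real.log (A β)) ((1 / β) * Real.log (B β))
        ≤ (1 / β) * Real.log (A β + B β) := by
    filter_upwards [hA, hB, eventually_gt_atTop 0] with β pA pB pβ
    apply max_le
    · exact mul_le_mul_of_nonneg_left (Real.log_le_log pA (by linarith)) (by positivity)
    · exact mul_le_mul_of_nonneg_left (Real.log_le_log pB (by linarith)) (by positivity)
  have hhigh : ∀ᶠ β : ℝ in atTop,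
      (1 / β) * Real.log (A β + B β)
        ≤ max ((1 / β) * Real.log (A β)) ((1 / β) * Real.log (B β)) + (1 / β) * Real.log 2 := by
    filter_upwards [hA, hB, eventually_gt_atTop 0] with β pA pB pβ
    rcases le_total (A β) (B β) with h | h
    · have h1 : Real.log (A β + B β) ≤ Real.log 2 + Real.log (B β) := by
        rw [← Real.log_mul (by norm_num) pB.ne']
        exact Real.log_le_log (by linarith) (by linarith)
      calc (1 / β) * Real.log (A β + B β) ≤ (1 / β) * (Real.log 2 + Real.log (B β)) :=
            mul_le_mul_of_nonneg_left h1 (by positivity)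
        _ = (1 / β) * Real.log (B β) + (1 / β) * Real.log 2 := by ring
        _ ≤ _ := by
            have := le_max_right ((1 / β) * Real.log (A β)) ((1 / β) * Real.log (B β))
            linarith
    · have h1 : Real.log (A β + B β) ≤ Real.log 2 + Real.log (A β) := by
        rw [← Real.log_mul (by norm_num) pA.ne']
        exact Real.log_le_log (by linarith) (by linarith)
      calc (1 / β) * Real.log (A β + B β) ≤ (1 / β) * (Real.log 2 + Real.log (A β)) :=
            mul_le_mul_of_nonneg_left h1 (by positivity)
        _ = (1 / β) * Real.log (A β) + (1 / β) * Real.log 2 := by ring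
        _ ≤ _ := by
            have := le_max_left ((1 / β) * Real.log (A β)) ((1 / β) * Real.log (B β))
            linarith
  refine tendsto_of_tendsto_of_tendsto_of_le_of_le' (ha.max hb) ?_ hlow hhigh
  simpa using (ha.max hb).add (const_div_tendsto (Real.log 2))

end ZeroTempAux

/-- Zero-temperature limit: for F_β(a) = e^{−βa + βx/2}·H(√β(x − a)/√x) + H(√β a/√x),
one has (1/β)·log F_β(a) → −E(a) as β → ∞, where E(a) is the Moreau envelope of
the hinge loss: E(a) = 0 for a ≤ 0, a²/(2x) for 0 < a ≤ x, a − x/2 for a > x. -/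

theorem zero_temperature_limit_hinge
    (x a : ℝ) (hx : 0 < x)
    (H : ℝ → ℝ)
    (hH : ∀ z, H z = (1 / Real.sqrt (2 * π)) * ∫ t in Set.Ioi z, Real.exp (-t ^ 2 / 2))
    (F : ℝ → ℝ)
    (hF : ∀ β : ℝ, 0 < β → F β
      = Real.exp (-β * a + β * x / 2) * H (Real.sqrt β * (x - a) / Real.sqrt x)
        + H (Real.sqrt β * a / Real.sqrt x)) :
    Tendsto (fun β : ℝ => (1 / β) * Real.log (F β)) atTop
      (nhds (-(if a ≤ 0 then 0
               else if a ≤ x then a ^ 2 / (2 * x)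
               else a - x / 2))) := by
  have hsx : 0 < Real.sqrt x := Real.sqrt_pos.2 hx
  have hsq : Real.sqrt x ^ 2 = x := Real.sq_sqrt hx.le
  have hHG : ∀ z, H z = (1 / Real.sqrt (2 * π)) * Gt z := fun z => hH z
  have hHpos : ∀ z, 0 < H z := fun z => by
    rw [hHG z]; exact mul_pos (by positivity) (Gt_pos z)
  set c1 := (x - a) / Real.sqrt x with hc1
  set c2 := a / Real.sqrt x with hc2
  have hlim1 : Tendsto (fun β : ℝ => (1 / β) * Real.log (H (c1 * Real.sqrt β))) atTop
      (nhds (-(max c1 0) ^ 2 / 2)) := by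
    simp only [hHG]; exact Hlim c1
  have hlim2 : Tendsto (fun β : ℝ => (1 / β) * Real.log (H (c2 * Real.sqrt β))) atTop
      (nhds (-(max c2 0) ^ 2 / 2)) := by
    simp only [hHG]; exact Hlim c2
  have hAlim : Tendsto (fun β : ℝ => (1 / β) * Real.log
      (Real.exp (-β * a + β * x / 2) * H (Real.sqrt β * (x - a) / Real.sqrt x))) atTop
      (nhds ((x / 2 - a) + -(max c1 0) ^ 2 / 2)) := by
    apply Tendsto.congr' ?_ ((tendsto_const_nhds (x := x / 2 - a)).add hlim1)
    filter_upwards [eventually_gt_atTop 0] with β hβ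
    have harg : Real.sqrt β * (x - a) / Real.sqrt x = c1 * Real.sqrt β := by
      rw [hc1]; ring
    rw [harg, Real.log_mul (Real.exp_ne_zero _) (hHpos _).ne', Real.log_exp]
    field_simp
    ring
  have hBlim : Tendsto (fun β : ℝ => (1 / β) * Real.log (H (Real.sqrt β * a / Real.sqrt x)))
      atTop (nhds (-(max c2 0) ^ 2 / 2)) := by
    apply Tendsto.congr' ?_ hlim2
    filter_upwards with β
    have harg : Real.sqrt β * a / Real.sqrt x = c2 * Real.sqrt β := by
      rw [hc2]; ring
    rw [harg]
  have main := one_div_log_add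
    (A := fun β : ℝ => Real.exp (-β * a + β * x / 2) * H (Real.sqrt β * (x - a) / Real.sqrt x))
    (B := fun β : ℝ => H (Real.sqrt β * a / Real.sqrt x))
    (Eventually.of_forall fun β => mul_pos (Real.exp_pos _) (hHpos _))
    (Eventually.of_forall fun β => hHpos _) hAlim hBlim
  have hFeq : (fun β : ℝ => (1 / β) * Real.log
      (Real.exp (-β * a + β * x / 2) * H (Real.sqrt β * (x - a) / Real.sqrt x)
        + H (Real.sqrt β * a / Real.sqrt x)))
      =ᶠ[atTop] fun β : ℝ => (1 / β) * Real.log (F β) := by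
    filter_upwards [eventually_gt_atTop 0] with β hβ
    rw [hF β hβ]
  have hval : max ((x / 2 - a) + -(max c1 0) ^ 2 / 2) (-(max c2 0) ^ 2 / 2)
      = -(if a ≤ 0 then 0 else if a ≤ x then a ^ 2 / (2 * x) else a - x / 2) := by
    have hc1sq : c1 ^ 2 = (x - a) ^ 2 / x := by rw [hc1, div_pow, hsq]
    have hc2sq : c2 ^ 2 = a ^ 2 / x := by rw [hc2, div_pow, hsq]
    split_ifs with h1 h2
    · have hm1 : max c1 0 = c1 := max_eq_left (div_nonneg (by linarith) hsx.le)
      have hm2 : max c2 0 = 0 := max_eq_right (div_nonpos_iff.mpr (Or.inr ⟨h1, hsx.le⟩))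
      rw [hm1, hm2, hc1sq]
      have hkey : (x / 2 - a) + -((x - a) ^ 2 / x) / 2 = -(a ^ 2 / x) / 2 := by
        field_simp; ring
      have h0 : 0 ≤ a ^ 2 / x := by positivity
      rw [show -(0:ℝ) ^ 2 / 2 = 0 by norm_num, max_eq_right (by linarith [hkey, h0]), neg_zero]
    · push_neg at h1
      have hm1 : max c1 0 = c1 := max_eq_left (div_nonneg (by linarith) hsx.le)
      have hm2 : max c2 0 = c2 := max_eq_left (div_nonneg (by linarith) hsx.le)
      rw [hm1, hm2, hc1sq, hc2sq]
      have hkey : (x / 2 - a) + -((x - a) ^ 2 / x) / 2 = -(a ^ 2 / x) / 2 := by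
        field_simp; ring
      rw [hkey, max_self]
      ring
    · push_neg at h1 h2
      have hm1 : max c1 0 = 0 := max_eq_right (div_nonpos_iff.mpr (Or.inr ⟨by linarith, hsx.le⟩))
      have hm2 : max c2 0 = c2 := max_eq_left (div_nonneg (by linarith) hsx.le)
      rw [hm1, hm2, hc2sq,
        show (x / 2 - a) + -(0:ℝ) ^ 2 / 2 = x / 2 - a by norm_num]
      have hkey : (x / 2 - a) - (-(a ^ 2 / x) / 2) = ((a - x) ^ 2 / x) / 2 := by
        field_simp; ring
      have h0 : 0 ≤ ((a - x) ^ 2 / x) / 2 := by positivity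
      rw [max_eq_left (by linarith [hkey, h0])]
      ring
  rw [← hval]
  exact main.congr' hFeq
end

section
/- For fixed K ∈ ℝ and x > 0, define G(q) for q > 0 by G(q) = −√(q/(2π))·[((x − K)/x)·e^{−(x−K)²/(2q)} + (K/x)·e^{−K²/(2q)}] + ((x − K)² + q)/x · H((x − K)/√q) − (K² + q)/x · H(−K/√q). Then G is differentiable on (0,∞) and dG/dq = −(1/x)·[H(−K/√q) − H((x − K)/√q)] = −(1/(2x))·[erfc(−K/√(2q)) − erfc((x − K)/√(2q))]. -/
open Real MeasureTheory

/-- Derivative of the right-tail integral of a continuous integrable function. -/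
lemma hasDerivAt_integral_Ioi {f : ℝ → ℝ} (hf : Continuous f) (hi : Integrable f) (z : ℝ) :
    HasDerivAt (fun w => ∫ t in Set.Ioi w, f t) (-(f z)) z := by
  have heq : ∀ w : ℝ, ∫ t in Set.Ioi w, f t
      = (∫ t, f t) - ((∫ t in Set.Iic (0:ℝ), f t) + ∫ t in (0:ℝ)..w, f t) := by
    intro w
    have h1 := intervalIntegral.integral_Iic_add_Ioi (b := w) hi.integrableOn hi.integrableOn
    have h2 := intervalIntegral.integral_Iic_sub_Iic (a := (0:ℝ)) (b := w)
      hi.integrableOn hi.integrableOn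
    linarith
  have hD : HasDerivAt (fun w => ∫ t in (0:ℝ)..w, f t) (f z) z :=
    intervalIntegral.integral_hasDerivAt_right hi.intervalIntegrable
      (hf.stronglyMeasurableAtFilter _ _) hf.continuousAt
  have h := ((hasDerivAt_const z (∫ t, f t)).sub
    ((hasDerivAt_const z (∫ t in Set.Iic (0:ℝ), f t)).add hD))
  rw [show (fun w => ∫ t in Set.Ioi w, f t)
      = fun w => (∫ t, f t) - ((∫ t in Set.Iic (0:ℝ), f t) + ∫ t in (0:ℝ)..w, f t)
    from funext heq]
  exact h.congr_deriv (by ring)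

lemma gauss_cont : Continuous fun t : ℝ => Real.exp (-t ^ 2 / 2) := by fun_prop

lemma gauss_int : Integrable fun t : ℝ => Real.exp (-t ^ 2 / 2) := by
  have := integrable_exp_neg_mul_sq (b := (1/2 : ℝ)) (by norm_num)
  convert this using 2 with t
  ring_nf

lemma gauss2_cont : Continuous fun t : ℝ => Real.exp (-t ^ 2) := by fun_prop

lemma gauss2_int : Integrable fun t : ℝ => Real.exp (-t ^ 2) := by
  have := integrable_exp_neg_mul_sq (b := (1 : ℝ)) (by norm_num)
  convert this using 2 with t
  ring_nf

/-- Derivative in q of the energetic term G(q) of the replica free energy: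
dG/dq = −(1/x)[H(−K/√q) − H((x−K)/√q)] = −(1/(2x))[erfc(−K/√(2q)) − erfc((x−K)/√(2q))]. -/
theorem energetic_term_deriv_q
    (K x : ℝ) (hx : 0 < x)
    (H erfc G : ℝ → ℝ)
    (hH : ∀ z, H z = (1 / Real.sqrt (2 * π)) * ∫ t in Set.Ioi z, Real.exp (-t ^ 2 / 2))
    (herfc : ∀ z, erfc z = (2 / Real.sqrt π) * ∫ t in Set.Ioi z, Real.exp (-t ^ 2))
    (hG : ∀ q : ℝ, 0 < q → G q
      = -Real.sqrt (q / (2 * π))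
          * ((x - K) / x * Real.exp (-(x - K) ^ 2 / (2 * q))
             + K / x * Real.exp (-K ^ 2 / (2 * q)))
        + ((x - K) ^ 2 + q) / x * H ((x - K) / Real.sqrt q)
        - (K ^ 2 + q) / x * H (-K / Real.sqrt q)) :
    ∀ q : ℝ, 0 < q →
      HasDerivAt G
        (-(1 / x) * (H (-K / Real.sqrt q) - H ((x - K) / Real.sqrt q))) q
      ∧ -(1 / x) * (H (-K / Real.sqrt q) - H ((x - K) / Real.sqrt q))
        = -(1 / (2 * x))
            * (erfc (-K / Real.sqrt (2 * q)) - erfc ((x - K) / Real.sqrt (2 * q))) := by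
  intro q hq
  have hqs : 0 < Real.sqrt q := Real.sqrt_pos.mpr hq
  have hq2 : Real.sqrt q ^ 2 = q := Real.sq_sqrt hq.le
  have hpi : (0:ℝ) < 2 * π := by positivity
  have hps : 0 < Real.sqrt (2 * π) := Real.sqrt_pos.mpr hpi
  -- derivative of H
  have hHd : ∀ z : ℝ, HasDerivAt H (-(1 / Real.sqrt (2 * π) * Real.exp (-z ^ 2 / 2))) z := by
    intro z
    have h := (hasDerivAt_integral_Ioi gauss_cont gauss_int z).const_mul
      (1 / Real.sqrt (2 * π))
    rw [show H = fun z => (1 / Real.sqrt (2 * π)) * ∫ t in Set.Ioi z, Real.exp (-t ^ 2 / 2)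
      from funext hH]
    exact h.congr_deriv (by ring)
  -- derivative of w ↦ a / √w at q
  have hdiv : ∀ a : ℝ, HasDerivAt (fun w : ℝ => a / Real.sqrt w)
      (-(a / (2 * q * Real.sqrt q))) q := by
    intro a
    have h1 : HasDerivAt Real.sqrt (1 / (2 * Real.sqrt q)) q := Real.hasDerivAt_sqrt hq.ne'
    have h2 := (h1.inv hqs.ne').const_mul a
    have h4 : HasDerivAt (fun w : ℝ => a / Real.sqrt w)
        (a * (-(1 / (2 * Real.sqrt q)) / Real.sqrt q ^ 2)) q := by
      simp only [div_eq_mul_inv] at h2 ⊢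
      exact h2
    convert h4 using 1
    rw [hq2]
    ring
  -- derivative of w ↦ H (a / √w) at q
  have hHcomp : ∀ a : ℝ, HasDerivAt (fun w : ℝ => H (a / Real.sqrt w))
      (1 / Real.sqrt (2 * π) * Real.exp (-a ^ 2 / (2 * q)) * (a / (2 * q * Real.sqrt q))) q := by
    intro a
    have h := (hHd (a / Real.sqrt q)).comp q (hdiv a)
    have hexp : Real.exp (-(a / Real.sqrt q) ^ 2 / 2) = Real.exp (-a ^ 2 / (2 * q)) := by
      congr 1
      rw [div_pow, hq2]
      ring
    exact h.congr_deriv (by rw [hexp]; ring)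
  have hH1 : HasDerivAt (fun w : ℝ => H ((x - K) / Real.sqrt w))
      (1 / Real.sqrt (2 * π) * Real.exp (-(x - K) ^ 2 / (2 * q))
        * ((x - K) / (2 * q * Real.sqrt q))) q := hHcomp (x - K)
  have hH2 : HasDerivAt (fun w : ℝ => H (-K / Real.sqrt w))
      (1 / Real.sqrt (2 * π) * Real.exp (-K ^ 2 / (2 * q))
        * (-K / (2 * q * Real.sqrt q))) q := by
    have h := hHcomp (-K)
    convert h using 2
    ring_nf
  -- derivative of w ↦ exp (-a²/(2w)) at q
  have hExp : ∀ a : ℝ, HasDerivAt (fun w : ℝ => Real.exp (-a ^ 2 / (2 * w)))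
      (Real.exp (-a ^ 2 / (2 * q)) * (a ^ 2 / (2 * q ^ 2))) q := by
    intro a
    have h1 : HasDerivAt (fun w : ℝ => -a ^ 2 / (2 * w)) (a ^ 2 / (2 * q ^ 2)) q := by
      have h2 := (hasDerivAt_inv hq.ne').const_mul (-a ^ 2 / 2)
      have h3 : (fun w : ℝ => -a ^ 2 / (2 * w)) = fun y => -a ^ 2 / 2 * y⁻¹ := by
        funext w
        rw [div_eq_mul_inv, div_eq_mul_inv, mul_inv]
        ring
      rw [h3]
      exact h2.congr_deriv (by ring)
    exact h1.exp
  -- derivative of w ↦ √(w/(2π)) at q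
  have hsq : HasDerivAt (fun w : ℝ => Real.sqrt (w / (2 * π)))
      (1 / (2 * Real.sqrt q) / Real.sqrt (2 * π)) q := by
    have h1 := (Real.hasDerivAt_sqrt hq.ne').div_const (Real.sqrt (2 * π))
    rw [show (fun w : ℝ => Real.sqrt (w / (2 * π))) = fun w => Real.sqrt w / Real.sqrt (2 * π)
      from funext fun w => Real.sqrt_div' w hpi.le]
    exact h1
  -- assemble
  have hA := hsq.neg.mul (((hExp (x - K)).const_mul ((x - K) / x)).add
    ((hExp K).const_mul (K / x)))
  have hB := (((hasDerivAt_id q).const_add ((x - K) ^ 2)).div_const x).mul hH1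
  have hC := (((hasDerivAt_id q).const_add (K ^ 2)).div_const x).mul hH2
  have hFd := (hA.add hB).sub hC
  have hmain : HasDerivAt G
      (-(1 / x) * (H (-K / Real.sqrt q) - H ((x - K) / Real.sqrt q))) q := by
    have heq : (fun w : ℝ =>
        -Real.sqrt (w / (2 * π))
          * ((x - K) / x * Real.exp (-(x - K) ^ 2 / (2 * w))
             + K / x * Real.exp (-K ^ 2 / (2 * w)))
        + ((x - K) ^ 2 + w) / x * H ((x - K) / Real.sqrt w)
        - (K ^ 2 + w) / x * H (-K / Real.sqrt w)) =ᶠ[nhds q] G := by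
      filter_upwards [eventually_gt_nhds hq] with w hw
      rw [hG w hw]
    apply HasDerivAt.congr_of_eventuallyEq _ heq.symm
    refine hFd.congr_deriv ?_
    simp only [Pi.add_apply, Pi.neg_apply, id_eq]
    rw [Real.sqrt_div' q hpi.le]
    set s := Real.sqrt q with hs
    set p := Real.sqrt (2 * π) with hp
    set E1 := Real.exp (-(x - K) ^ 2 / (2 * q)) with hE1
    set E2 := Real.exp (-K ^ 2 / (2 * q)) with hE2
    rw [← hq2]
    field_simp [hx.ne', hqs.ne', hps.ne']
    ring
  refine ⟨hmain, ?_⟩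
  -- second equality : H in terms of erfc
  have hsp : (0:ℝ) < Real.sqrt π := Real.sqrt_pos.mpr Real.pi_pos
  have hs2 : (0:ℝ) < Real.sqrt 2 := by positivity
  have hHerfc : ∀ z, H z = erfc (z / Real.sqrt 2) / 2 := by
    intro z
    rw [hH z, herfc]
    have hb : (0:ℝ) < (Real.sqrt 2)⁻¹ := by positivity
    have hch := MeasureTheory.integral_comp_mul_left_Ioi
      (fun t => Real.exp (-t ^ 2)) z hb
    have hint : ∀ t : ℝ, Real.exp (-((Real.sqrt 2)⁻¹ * t) ^ 2) = Real.exp (-t ^ 2 / 2) := by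
      intro t
      congr 1
      rw [mul_pow, inv_pow, Real.sq_sqrt (by norm_num : (0:ℝ) ≤ 2)]
      ring
    simp only [hint, inv_inv, smul_eq_mul] at hch
    rw [hch]
    have harg : (Real.sqrt 2)⁻¹ * z = z / Real.sqrt 2 := by rw [div_eq_mul_inv]; ring
    rw [harg]
    have hsplit : Real.sqrt (2 * π) = Real.sqrt 2 * Real.sqrt π :=
      Real.sqrt_mul (by norm_num) π
    rw [hsplit]
    field_simp
  have hs2q : Real.sqrt (2 * q) = Real.sqrt 2 * Real.sqrt q := Real.sqrt_mul (by norm_num) q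
  rw [hHerfc, hHerfc, hs2q]
  have e1 : -K / Real.sqrt q / Real.sqrt 2 = -K / (Real.sqrt 2 * Real.sqrt q) := by
    rw [div_div, mul_comm]
  have e2 : (x - K) / Real.sqrt q / Real.sqrt 2 = (x - K) / (Real.sqrt 2 * Real.sqrt q) := by
    rw [div_div, mul_comm]
  rw [e1, e2]
  ring
end

section
/- Let d ≥ 1 and n ≥ 1 be integers and let P, Q be d×d real matrices. Let Σ be the (nd)×(nd) block matrix whose n diagonal d×d blocks all equal P and whose off-diagonal d×d blocks all equal Q (i.e. Σ = I_n ⊗ P + (J_n − I_n) ⊗ Q, where J_n is the all-ones n×n matrix). Then det Σ = det(P − Q)^{n−1} · det(P + (n−1)·Q). -/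
/-!
`Σ = 1 ⊗ (P - Q) + J ⊗ Q` with `J = 𝟙 𝟙ᵀ`. Conjugating by `L ⊗ 1`, where `L` subtracts the first
row from all the others, fixes `1 ⊗ (P - Q)` and turns `J` into `(L 𝟙)(𝟙ᵀ L⁻¹) = e₀ (𝟙 + (n - 1) e₀)ᵀ`,
whose only nonzero row is the first. The conjugate is therefore block upper triangular, with
diagonal blocks `P - Q + n Q` once and `P - Q` repeated `n - 1` times. Only row operations are used,
so no invertibility of `P - Q` is needed.
-/

open Kronecker

namespace Matrix

variable {ι m R : Type*} [Fintype m] [DecidableEq m] [CommRing R]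

theorem det_kronecker_add_kronecker_of_isUpperTriangular [Fintype ι] [DecidableEq ι]
    [LinearOrder ι] {X E : Matrix ι ι R} (hX : X.IsUpperTriangular) (hE : E.IsUpperTriangular)
    (A B : Matrix m m R) :
    det (X ⊗ₖ A + E ⊗ₖ B) = ∏ i, det (X i i • A + E i i • B) := by
  have hT : (X ⊗ₖ A + E ⊗ₖ B).BlockTriangular Prod.fst := fun p q hlt => by
    simp [hX hlt, hE hlt]
  rw [hT.det_fintype]
  refine Finset.prod_congr rfl fun i _ => ?_
  let e : {p : ι × m // p.1 = i} ≃ m :=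
    { toFun := fun p => p.1.2
      invFun := fun k => ⟨(i, k), rfl⟩
      left_inv := fun ⟨⟨_, _⟩, h⟩ => by subst h; rfl
      right_inv := fun _ => rfl }
  rw [← det_submatrix_equiv_self e]
  congr 1
  ext ⟨⟨a, k⟩, ha⟩ ⟨⟨b, l⟩, hb⟩
  dsimp only at ha hb
  subst ha hb
  simp [toSquareBlock_def, e]

theorem isUpperTriangular_vecMulVec_single_bot [LinearOrder ι] [OrderBot ι] [DecidableEq ι]
    (a : R) (v : ι → R) : (vecMulVec (Pi.single ⊥ a) v).IsUpperTriangular := by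
  intro i j hji
  have hi : i ≠ ⊥ := ne_bot_of_gt hji
  simp [vecMulVec_apply, hi]

section BroadcastRow

variable [Fintype ι] [DecidableEq ι] (i₀ : ι)

/-- `1 - broadcastRow i₀` is the row operation subtracting row `i₀` from every other row. -/
def broadcastRow : Matrix ι ι R := vecMulVec (1 - Pi.single i₀ 1) (Pi.single i₀ 1)

theorem broadcastRow_mul_self : broadcastRow (R := R) i₀ * broadcastRow i₀ = 0 := by
  simp [broadcastRow, vecMulVec_mul_vecMulVec, dotProduct_sub]

theorem one_sub_broadcastRow_mul_one_add :
    (1 - broadcastRow (R := R) i₀) * (1 + broadcastRow i₀) = 1 := by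
  rw [sub_mul, mul_add, mul_add, broadcastRow_mul_self, one_mul, mul_one, one_mul]
  abel

theorem one_add_broadcastRow_mul_one_sub :
    (1 + broadcastRow (R := R) i₀) * (1 - broadcastRow i₀) = 1 := by
  rw [add_mul, mul_sub, mul_sub, broadcastRow_mul_self, one_mul, mul_one, one_mul]
  abel

theorem one_sub_broadcastRow_mul_vecMulVec_one_one_mul_one_add :
    (1 - broadcastRow i₀) * vecMulVec 1 1 * (1 + broadcastRow i₀) =
      vecMulVec (Pi.single i₀ 1) (1 + ((Fintype.card ι : R) - 1) • Pi.single i₀ 1) := by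
  rw [mul_vecMulVec, vecMulVec_mul]
  simp [broadcastRow, sub_mulVec, vecMul_add, vecMulVec_mulVec, vecMul_vecMulVec, dotProduct_sub]

end BroadcastRow

theorem det_one_kronecker_add_vecMulVec_one_one_kronecker [Fintype ι] [DecidableEq ι]
    [LinearOrder ι] [OrderBot ι] (A B : Matrix m m R) :
    det ((1 : Matrix ι ι R) ⊗ₖ A + vecMulVec 1 1 ⊗ₖ B) =
      det A ^ (Fintype.card ι - 1) * det (A + (Fintype.card ι : R) • B) := by
  set L : Matrix ι ι R := 1 - broadcastRow ⊥
  set U : Matrix ι ι R := 1 + broadcastRow ⊥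
  set E : Matrix ι ι R :=
    vecMulVec (Pi.single ⊥ 1) (1 + ((Fintype.card ι : R) - 1) • Pi.single ⊥ 1)
  have hLU : (L ⊗ₖ (1 : Matrix m m R)) * (U ⊗ₖ 1) = 1 := by
    rw [← mul_kronecker_mul, one_sub_broadcastRow_mul_one_add, one_mul, one_kronecker_one]
  have hUL : (U ⊗ₖ (1 : Matrix m m R)) * (L ⊗ₖ 1) = 1 := by
    rw [← mul_kronecker_mul, one_add_broadcastRow_mul_one_sub, one_mul, one_kronecker_one]
  have hconj : (L ⊗ₖ 1) * ((1 : Matrix ι ι R) ⊗ₖ A + vecMulVec 1 1 ⊗ₖ B) * (U ⊗ₖ 1) =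
      1 ⊗ₖ A + E ⊗ₖ B := by
    rw [Matrix.mul_add, Matrix.add_mul, ← mul_kronecker_mul, ← mul_kronecker_mul,
      ← mul_kronecker_mul, ← mul_kronecker_mul, Matrix.mul_one, Matrix.one_mul, Matrix.mul_one,
      Matrix.mul_one, Matrix.one_mul, one_sub_broadcastRow_mul_one_add,
      one_sub_broadcastRow_mul_vecMulVec_one_one_mul_one_add]
  have hrest : ∀ i ∈ ({⊥}ᶜ : Finset ι), det ((1 : Matrix ι ι R) i i • A + E i i • B) = det A := by
    intro i hi
    have hi : i ≠ ⊥ := by simpa using hi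
    simp [E, vecMulVec_apply, hi]
  rw [← det_conj_of_mul_eq_one hLU hUL, hconj,
    det_kronecker_add_kronecker_of_isUpperTriangular blockTriangular_one
      (isUpperTriangular_vecMulVec_single_bot _ _),
    Fintype.prod_eq_mul_prod_compl ⊥, Finset.prod_congr rfl hrest, Finset.prod_const,
    Finset.card_compl, Finset.card_singleton]
  simp [vecMulVec_apply, mul_comm]

end Matrix

theorem replica_symmetric_block_det_general
    (d n : ℕ) (hn : 1 ≤ n)
    (P Q : Matrix (Fin d) (Fin d) ℝ)
    (Sig : Matrix (Fin n × Fin d) (Fin n × Fin d) ℝ)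
    (hSig : ∀ (a b : Fin n) (i j : Fin d),
      Sig (a, i) (b, j) = if a = b then P i j else Q i j) :
    Sig.det = (P - Q).det ^ (n - 1) * (P + ((n : ℝ) - 1) • Q).det := by
  have : NeZero n := ⟨by omega⟩
  have hSig' : Sig = 1 ⊗ₖ (P - Q) + Matrix.vecMulVec 1 1 ⊗ₖ Q := by
    ext ⟨a, i⟩ ⟨b, j⟩
    by_cases hab : a = b <;> simp [hSig, hab]
  rw [hSig', Matrix.det_one_kronecker_add_vecMulVec_one_one_kronecker, Fintype.card_fin]
  congr 2
  module

/-- Determinant of a replica-symmetric block matrix: if Σ has n diagonal d×d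
blocks equal to P and all off-diagonal blocks equal to Q, then
det Σ = det(P − Q)^{n−1} · det(P + (n−1)Q). -/
theorem replica_symmetric_block_det
    (d n : ℕ) (hd : 1 ≤ d) (hn : 1 ≤ n)
    (P Q : Matrix (Fin d) (Fin d) ℝ)
    (Sig : Matrix (Fin n × Fin d) (Fin n × Fin d) ℝ)
    (hSig : ∀ (a b : Fin n) (i j : Fin d),
      Sig (a, i) (b, j) = if a = b then P i j else Q i j) :
    Sig.det = (P - Q).det ^ (n - 1) * (P + ((n : ℝ) - 1) • Q).det :=
  replica_symmetric_block_det_general d n hn P Q Sig hSig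
end
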